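/- Fix n ≥ 1 and pairwise distinct deterministic labels u_1,…,u_n ∈ (0,1). Let μ and μ' be probability distributions on {1,2,…} with the same finite mean, and assume μ' is supported on {ℓ, ℓ+1} for some ℓ ≥ 1. Let V = (ν_i)_{1≤i≤n} be i.i.d. with law μ and V' = (ν'_i)_{1≤i≤n} be i.i.d. with law μ', independent of V. Then E[R((u_i,ν'_i)_{1≤i≤n})] ≤ E[R((u_i,ν_i)_{1≤i≤n})]: among offspring laws with a given mean, the one supported on two consecutive integers requires in average the fewest heaps. -/

import Mathlib

open MeasureTheory ProbabilityTheory Filter Topology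
open scoped ENNReal NNReal

namespace HeapPatience

/-- Decrement by one the number of lives of the (first) alive particle with label `x`. -/
noncomputable def decrementAt : List (ℝ × ℕ) → ℝ → List (ℝ × ℕ)
  | [], _ => []
  | p :: rest, x =>
      if p.1 = x ∧ 0 < p.2 then (p.1, p.2 - 1) :: rest else p :: decrementAt rest x

/-- One step of the heap patience sorting algorithm, where `acc = (state, number of roots)`:
the new item is attached as a child of the alive particle (a particle with at least one
remaining life) having the largest label smaller than the label of the item, and that
particle loses one life; if there is no such particle, a new root (tree) is created. -/
noncomputable def step (acc : List (ℝ × ℕ) × ℕ) (item : ℝ × ℕ) : List (ℝ × ℕ) × ℕ :=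
  match (acc.1.filter fun p => decide (0 < p.2 ∧ p.1 < item.1)).argmax Prod.fst with
  | none => (item :: acc.1, acc.2 + 1)
  | some q => (item :: decrementAt acc.1 q.1, acc.2)

/-- Run the heap patience sorting algorithm on the items `(label, lives)` in order; returns
the final state (the particles with their remaining lives) and the number of roots created. -/
noncomputable def run (items : List (ℝ × ℕ)) : List (ℝ × ℕ) × ℕ :=
  items.foldl step ([], 0)

/-- `R items` : the number of heaps (trees) produced by the heap patience sorting
algorithm applied to the finite sequence `items` of pairs `(label, number of lives)`. -/
noncomputable def R (items : List (ℝ × ℕ)) : ℕ := (run items).2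

/-- `D items` : after running the algorithm, the number of dead particles whose label is
smaller than the label of every alive particle, i.e. the number of leading zeros of the
label-ordered vector of remaining lives. -/
noncomputable def D (items : List (ℝ × ℕ)) : ℕ :=
  ((run items).1.filter fun p =>
      decide (p.2 = 0 ∧ ∀ q ∈ (run items).1, 0 < q.2 → p.1 < q.1)).length

/-- `Rn U ν n ω` : the random number of heaps `𝐑(n)` needed to sort the first `n`
random items `(U i ω, ν i ω)`. -/
noncomputable def Rn {Ω : Type} (U : ℕ → Ω → ℝ) (ν : ℕ → Ω → ℕ) (n : ℕ) (ω : Ω) : ℕ :=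
  R ((List.range n).map fun i => (U i ω, ν i ω))

/-- `Dn U ν n ω` : the random variable `D_n`, the number of dead items whose label is
smaller than the label of every alive item after sorting the first `n` random items. -/
noncomputable def Dn {Ω : Type} (U : ℕ → Ω → ℝ) (ν : ℕ → Ω → ℕ) (n : ℕ) (ω : Ω) : ℕ :=
  D ((List.range n).map fun i => (U i ω, ν i ω))

/-- The uniform probability measure on the interval `(0,1)`. -/
noncomputable def unif01 : Measure ℝ := volume.restrict (Set.Ioo 0 1)

/-!
Fix the lives of all items but one and give that item `k`, `k + 1` and `k + 2` lives. Run the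
three executions in parallel: two consecutive ones differ by a single life at a single particle,
and they stay so (the defect possibly moving to a smaller label) until the poorer execution starts
a new tree where the richer one attaches to the defect; from then on their states coincide, the
poorer one having one tree more. The defect of the first pair never lies above that of the second,
so the second pair cannot merge while the first is still apart. Hence
`2 R(k + 1) ≤ R(k) + R(k + 2)`: the number of heaps is discretely convex in each number of lives.

A discretely convex `f : ℕ → ℝ` lies above its chord through `ℓ` and `ℓ + 1`, which it agrees
with on the support of `μ'`; as the chord is affine and `μ`, `μ'` have the same mean,
`∫ f ∂μ' ≤ ∫ f ∂μ`. Replacing the laws of the lives one coordinate at a time (Fubini) gives the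
theorem.
-/

section Parent

variable {s : List (ℝ × ℕ)} {x y : ℝ}

noncomputable def aliveBelow (s : List (ℝ × ℕ)) (x : ℝ) : List (ℝ × ℕ) :=
  s.filter fun p => decide (0 < p.2 ∧ p.1 < x)

noncomputable def parent (s : List (ℝ × ℕ)) (x : ℝ) : Option ℝ :=
  ((aliveBelow s x).argmax Prod.fst).map Prod.fst

lemma mem_aliveBelow {p : ℝ × ℕ} :
    p ∈ aliveBelow s x ↔ p ∈ s ∧ 0 < p.2 ∧ p.1 < x := by
  simp [aliveBelow]

lemma parent_eq_none_iff : parent s x = none ↔ aliveBelow s x = [] := by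
  simp [parent]

lemma parent_eq_some_iff :
    parent s x = some y ↔
      (∃ p ∈ aliveBelow s x, p.1 = y) ∧ ∀ p ∈ aliveBelow s x, p.1 ≤ y := by
  constructor
  · intro h
    obtain ⟨q, hq, rfl⟩ := Option.map_eq_some_iff.1 h
    exact ⟨⟨q, List.argmax_mem hq, rfl⟩, fun p hp => List.le_of_mem_argmax hp hq⟩
  · rintro ⟨⟨p, hp, rfl⟩, hmax⟩
    obtain ⟨q, hq⟩ := Option.ne_none_iff_exists'.1
      (mt (List.argmax_eq_none (f := Prod.fst)).1 (List.ne_nil_of_mem hp))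
    have hpq := List.le_of_mem_argmax hp hq
    have hqp := hmax q (List.argmax_mem hq)
    rw [parent, hq, Option.map_some, le_antisymm hqp hpq]

lemma le_of_parent_eq_some (h : parent s x = some y) {p : ℝ × ℕ} (hp : p ∈ aliveBelow s x) :
    p.1 ≤ y :=
  (parent_eq_some_iff.1 h).2 p hp

lemma lt_of_parent_eq_some (h : parent s x = some y) : y < x := by
  obtain ⟨p, hp, rfl⟩ := (parent_eq_some_iff.1 h).1
  exact (mem_aliveBelow.1 hp).2.2

lemma step_of_parent_eq_none (h : parent s x = none) (r v : ℕ) :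
    step (s, r) (x, v) = ((x, v) :: s, r + 1) := by
  rw [parent_eq_none_iff, aliveBelow, ← List.argmax_eq_none (f := Prod.fst)] at h
  unfold step
  rw [show ((x, v) : ℝ × ℕ).1 = x from rfl, h]

lemma step_of_parent_eq_some (h : parent s x = some y) (r v : ℕ) :
    step (s, r) (x, v) = ((x, v) :: decrementAt s y, r) := by
  obtain ⟨q, hq, rfl⟩ := Option.map_eq_some_iff.1 h
  rw [aliveBelow] at hq
  unfold step
  rw [show ((x, v) : ℝ × ℕ).1 = x from rfl, hq]

end Parent

lemma map_fst_decrementAt (s : List (ℝ × ℕ)) (y : ℝ) :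
    (decrementAt s y).map Prod.fst = s.map Prod.fst := by
  induction s with
  | nil => rfl
  | cons p rest ih => by_cases h : p.1 = y ∧ 0 < p.2 <;> simp [decrementAt, h, ih]

lemma map_fst_step (a : List (ℝ × ℕ) × ℕ) (it : ℝ × ℕ) :
    (step a it).1.map Prod.fst = it.1 :: a.1.map Prod.fst := by
  obtain ⟨s, r⟩ := a
  obtain ⟨x, v⟩ := it
  cases h : parent s x with
  | none => simp [step_of_parent_eq_none h]
  | some y => simp [step_of_parent_eq_some h, map_fst_decrementAt]

lemma map_fst_foldl_step (items : List (ℝ × ℕ)) (a : List (ℝ × ℕ) × ℕ) :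
    (items.foldl step a).1.map Prod.fst = (items.map Prod.fst).reverse ++ a.1.map Prod.fst := by
  induction items generalizing a with
  | nil => simp
  | cons it rest ih => simp [ih, map_fst_step]

lemma decrementAt_append (s₁ s₂ : List (ℝ × ℕ)) (y : ℝ) :
    decrementAt (s₁ ++ s₂) y =
      if ∃ p ∈ s₁, p.1 = y ∧ 0 < p.2 then decrementAt s₁ y ++ s₂
      else s₁ ++ decrementAt s₂ y := by
  induction s₁ with
  | nil => simp
  | cons p rest ih =>
    by_cases hp : p.1 = y ∧ 0 < p.2
    · simp [decrementAt, hp]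
    · have hex : (∃ q ∈ p :: rest, q.1 = y ∧ 0 < q.2) ↔ ∃ q ∈ rest, q.1 = y ∧ 0 < q.2 := by
        simp [hp]
      simp only [List.cons_append, decrementAt, if_neg hp, ih, hex]
      split_ifs <;> rfl

lemma exists_step_eq (a : List (ℝ × ℕ) × ℕ) (x : ℝ) :
    ∃ z r, z.map Prod.fst = a.1.map Prod.fst ∧ ∀ v, step a (x, v) = ((x, v) :: z, r) := by
  obtain ⟨s, r⟩ := a
  cases h : parent s x with
  | none => exact ⟨s, r + 1, rfl, step_of_parent_eq_none h r⟩
  | some y => exact ⟨decrementAt s y, r, map_fst_decrementAt s y, step_of_parent_eq_some h r⟩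

def AddLife (w : ℝ) (s t : List (ℝ × ℕ)) : Prop :=
  ∃ s₁ s₂ m, s = s₁ ++ (w, m) :: s₂ ∧ t = s₁ ++ (w, m + 1) :: s₂

lemma addLife_decrementAt {s : List (ℝ × ℕ)} {p : ℝ × ℕ} (hp : p ∈ s) (hlive : 0 < p.2) :
    AddLife p.1 (decrementAt s p.1) s := by
  induction s with
  | nil => simp at hp
  | cons q rest ih =>
    by_cases hq : q.1 = p.1 ∧ 0 < q.2
    · refine ⟨[], rest, q.2 - 1, by simp [decrementAt, hq], ?_⟩
      rw [List.nil_append, Nat.sub_add_cancel hq.2, ← hq.1]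
    · have hrest : p ∈ rest := by
        rcases List.mem_cons.1 hp with rfl | h
        · exact absurd ⟨rfl, hlive⟩ hq
        · exact h
      obtain ⟨s₁, s₂, m, hs, ht⟩ := ih hrest
      exact ⟨q :: s₁, s₂, m, by simp [decrementAt, hq, hs], by simp [ht]⟩

namespace AddLife

variable {w x : ℝ} {s t : List (ℝ × ℕ)}

lemma map_fst (h : AddLife w s t) : s.map Prod.fst = t.map Prod.fst := by
  obtain ⟨s₁, s₂, m, rfl, rfl⟩ := h
  simp

lemma cons (h : AddLife w s t) (p : ℝ × ℕ) : AddLife w (p :: s) (p :: t) := by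
  obtain ⟨s₁, s₂, m, rfl, rfl⟩ := h
  exact ⟨p :: s₁, s₂, m, rfl, rfl⟩

lemma decrementAt_of_ne (h : AddLife w s t) {y : ℝ} (hy : y ≠ w) :
    AddLife w (decrementAt s y) (decrementAt t y) := by
  obtain ⟨s₁, s₂, m, rfl, rfl⟩ := h
  have hskip (k : ℕ) : decrementAt ((w, k) :: s₂) y = (w, k) :: decrementAt s₂ y := by
    simp [decrementAt, hy.symm]
  rw [decrementAt_append, decrementAt_append]
  split_ifs
  · exact ⟨decrementAt s₁ y, s₂, m, rfl, rfl⟩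
  · rw [hskip, hskip]
    exact ⟨s₁, decrementAt s₂ y, m, rfl, rfl⟩

lemma decrementAt_self (h : AddLife w s t) (hnd : (s.map Prod.fst).Nodup) :
    decrementAt t w = s := by
  obtain ⟨s₁, s₂, m, rfl, rfl⟩ := h
  have hw : w ∉ s₁.map Prod.fst := by
    simp only [List.map_append, List.map_cons] at hnd
    exact fun hw => (List.nodup_append.1 hnd).2.2 w hw w List.mem_cons_self rfl
  rw [decrementAt_append, if_neg fun ⟨p, hp, hpw, _⟩ => hw (hpw ▸ List.mem_map_of_mem hp)]
  simp [decrementAt]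

lemma exists_mem_aliveBelow (h : AddLife w s t) {p : ℝ × ℕ} (hp : p ∈ aliveBelow s x) :
    ∃ q ∈ aliveBelow t x, q.1 = p.1 := by
  obtain ⟨s₁, s₂, m, rfl, rfl⟩ := h
  obtain ⟨hps, hlive, hpx⟩ := mem_aliveBelow.1 hp
  rcases List.mem_append.1 hps with h₁ | h₂
  · exact ⟨p, mem_aliveBelow.2 ⟨List.mem_append_left _ h₁, hlive, hpx⟩, rfl⟩
  · rcases List.mem_cons.1 h₂ with rfl | h₂
    · exact ⟨(w, m + 1), mem_aliveBelow.2 ⟨by simp, m.succ_pos, hpx⟩, rfl⟩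
    · exact ⟨p, mem_aliveBelow.2 ⟨by simp [h₂], hlive, hpx⟩, rfl⟩

lemma mem_aliveBelow_of_ne (h : AddLife w s t) {q : ℝ × ℕ} (hq : q ∈ aliveBelow t x)
    (hqw : q.1 ≠ w) : q ∈ aliveBelow s x := by
  obtain ⟨s₁, s₂, m, rfl, rfl⟩ := h
  obtain ⟨hqt, hlive, hqx⟩ := mem_aliveBelow.1 hq
  refine mem_aliveBelow.2 ⟨?_, hlive, hqx⟩
  rcases List.mem_append.1 hqt with h₁ | h₂
  · exact List.mem_append_left _ h₁
  · rcases List.mem_cons.1 h₂ with rfl | h₂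
    · exact absurd rfl hqw
    · simp [h₂]

lemma exists_mem_aliveBelow_self (h : AddLife w s t) (hw : w < x) :
    ∃ q ∈ aliveBelow t x, q.1 = w := by
  obtain ⟨s₁, s₂, m, rfl, rfl⟩ := h
  exact ⟨(w, m + 1), mem_aliveBelow.2 ⟨by simp, m.succ_pos, hw⟩, rfl⟩

lemma parent_eq_none (h : AddLife w s t) (ht : parent t x = none) : parent s x = none := by
  rw [parent_eq_none_iff, List.eq_nil_iff_forall_not_mem] at ht ⊢
  intro p hp
  obtain ⟨q, hq, -⟩ := h.exists_mem_aliveBelow hp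
  exact ht q hq

lemma parent_eq_of_ne (h : AddLife w s t) {z : ℝ} (ht : parent t x = some z) (hz : z ≠ w) :
    parent s x = some z := by
  obtain ⟨⟨q, hq, rfl⟩, hmax⟩ := parent_eq_some_iff.1 ht
  refine parent_eq_some_iff.2 ⟨⟨q, h.mem_aliveBelow_of_ne hq hz, rfl⟩, fun p hp => ?_⟩
  obtain ⟨p', hp', hpp'⟩ := h.exists_mem_aliveBelow hp
  exact hpp' ▸ hmax p' hp'

lemma le_of_parent_eq_some (h : AddLife w s t) {y z : ℝ} (hs : parent s x = some y)
    (ht : parent t x = some z) : y ≤ z := by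
  obtain ⟨p, hp, rfl⟩ := (parent_eq_some_iff.1 hs).1
  obtain ⟨q, hq, hqp⟩ := h.exists_mem_aliveBelow hp
  exact hqp ▸ HeapPatience.le_of_parent_eq_some ht hq

lemma le_of_parent_eq_some_self (h : AddLife w s t) (hw : w < x) {z : ℝ}
    (ht : parent t x = some z) : w ≤ z := by
  obtain ⟨q, hq, rfl⟩ := h.exists_mem_aliveBelow_self hw
  exact HeapPatience.le_of_parent_eq_some ht hq

end AddLife

def Coupled (w : ℝ) (A B : List (ℝ × ℕ) × ℕ) : Prop :=
  AddLife w A.1 B.1 ∧ A.2 = B.2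

def Merged (A B : List (ℝ × ℕ) × ℕ) : Prop :=
  A.1 = B.1 ∧ A.2 = B.2 + 1

lemma Merged.map_step {A B : List (ℝ × ℕ) × ℕ} (h : Merged A B) (it : ℝ × ℕ) :
    Merged (step A it) (step B it) := by
  obtain ⟨s, r⟩ := A
  obtain ⟨t, r'⟩ := B
  obtain ⟨rfl, hr : r = r' + 1⟩ := h
  subst hr
  obtain ⟨x, v⟩ := it
  cases h : parent s x with
  | none => simp [step_of_parent_eq_none h, Merged]
  | some y => simp [step_of_parent_eq_some h, Merged]

lemma Coupled.step_cases {w : ℝ} {A B : List (ℝ × ℕ) × ℕ} (hnd : (A.1.map Prod.fst).Nodup)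
    (h : Coupled w A B) (x : ℝ) (v : ℕ) :
    Coupled w (step A (x, v)) (step B (x, v)) ∨
    (∃ y, parent A.1 x = some y ∧ parent B.1 x = some w ∧ y < w ∧
      Coupled y (step A (x, v)) (step B (x, v))) ∨
    (parent A.1 x = none ∧ parent B.1 x = some w ∧ Merged (step A (x, v)) (step B (x, v))) := by
  obtain ⟨s, r⟩ := A
  obtain ⟨t, r'⟩ := B
  obtain ⟨hst, rfl⟩ := h
  cases ht : parent t x with
  | none =>
    left
    rw [step_of_parent_eq_none (hst.parent_eq_none ht), step_of_parent_eq_none ht]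
    exact ⟨hst.cons _, rfl⟩
  | some z =>
    by_cases hz : z = w
    · subst hz
      have hdec := hst.decrementAt_self hnd
      cases hs : parent s x with
      | none =>
        right; right
        rw [step_of_parent_eq_none hs, step_of_parent_eq_some ht, hdec]
        exact ⟨rfl, rfl, rfl, rfl⟩
      | some y =>
        obtain ⟨p, hp, rfl⟩ := (parent_eq_some_iff.1 hs).1
        have hadd := addLife_decrementAt (mem_aliveBelow.1 hp).1 (mem_aliveBelow.1 hp).2.1
        rw [step_of_parent_eq_some hs, step_of_parent_eq_some ht, hdec]
        rcases (hst.le_of_parent_eq_some hs ht).lt_or_eq with hlt | heq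
        · exact Or.inr (Or.inl ⟨p.1, rfl, rfl, hlt, hadd.cons _, rfl⟩)
        · exact Or.inl ⟨heq ▸ hadd.cons _, rfl⟩
    · left
      rw [step_of_parent_eq_some (hst.parent_eq_of_ne ht hz), step_of_parent_eq_some ht]
      exact ⟨(hst.decrementAt_of_ne hz).cons _, rfl⟩

def CoupledOrMerged (A B : List (ℝ × ℕ) × ℕ) : Prop :=
  (∃ w, Coupled w A B) ∨ Merged A B

lemma CoupledOrMerged.map_step {A B : List (ℝ × ℕ) × ℕ} (hnd : (A.1.map Prod.fst).Nodup)
    (h : CoupledOrMerged A B) (it : ℝ × ℕ) : CoupledOrMerged (step A it) (step B it) := by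
  rcases h with ⟨w, h⟩ | h
  · rcases h.step_cases hnd it.1 it.2 with h' | ⟨y, -, -, -, h'⟩ | ⟨-, -, h'⟩
    · exact Or.inl ⟨w, h'⟩
    · exact Or.inl ⟨y, h'⟩
    · exact Or.inr h'
  · exact Or.inr (h.map_step it)

def TripleCoupling (A B C : List (ℝ × ℕ) × ℕ) : Prop :=
  (∃ w₁ w₂, w₁ ≤ w₂ ∧ Coupled w₁ A B ∧ Coupled w₂ B C) ∨
    (Merged A B ∧ CoupledOrMerged B C)

lemma TripleCoupling.two_mul_le {A B C : List (ℝ × ℕ) × ℕ} (h : TripleCoupling A B C) :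
    2 * B.2 ≤ A.2 + C.2 := by
  rcases h with ⟨-, -, -, ⟨-, h₁⟩, ⟨-, h₂⟩⟩ | ⟨⟨-, h₁⟩, ⟨-, ⟨-, h₂⟩⟩ | ⟨-, h₂⟩⟩ <;>
    omega

lemma TripleCoupling.map_step {A B C : List (ℝ × ℕ) × ℕ} (hnd : (A.1.map Prod.fst).Nodup)
    (h : TripleCoupling A B C) (it : ℝ × ℕ) :
    TripleCoupling (step A it) (step B it) (step C it) := by
  obtain ⟨x, v⟩ := it
  rcases h with ⟨w₁, w₂, hle, hAB, hBC⟩ | ⟨hAB, hBC⟩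
  · obtain ⟨w₂', hBC', hw₂'⟩ : ∃ w₂', Coupled w₂' (step B (x, v)) (step C (x, v)) ∧
        (w₂' = w₂ ∨ (parent B.1 x = some w₂' ∧ w₂ < x)) := by
      rcases hBC.step_cases (hAB.1.map_fst ▸ hnd) x v with
        h | ⟨y, hB, hC, -, h⟩ | ⟨hB, hC, -⟩
      · exact ⟨w₂, h, Or.inl rfl⟩
      · exact ⟨y, h, Or.inr ⟨hB, lt_of_parent_eq_some hC⟩⟩
      · -- `B` has a life at `w₁ ≤ w₂ < x`, so it cannot start a new tree
        obtain ⟨q, hq, -⟩ :=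
          hAB.1.exists_mem_aliveBelow_self (hle.trans_lt (lt_of_parent_eq_some hC))
        rw [parent_eq_none_iff] at hB
        simp [hB] at hq
    rcases hAB.step_cases hnd x v with hAB' | ⟨y, -, hB, hlt, hAB'⟩ | ⟨-, -, hAB'⟩
    · refine Or.inl ⟨w₁, w₂', ?_, hAB', hBC'⟩
      rcases hw₂' with rfl | ⟨hB, hw₂x⟩
      · exact hle
      · exact hAB.1.le_of_parent_eq_some_self (hle.trans_lt hw₂x) hB
    · refine Or.inl ⟨y, w₂', ?_, hAB', hBC'⟩
      rcases hw₂' with rfl | ⟨hB', -⟩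
      · exact (hlt.trans_le hle).le
      · rw [hB, Option.some_inj] at hB'
        exact hB' ▸ hlt.le
    · exact Or.inr ⟨hAB', Or.inl ⟨w₂', hBC'⟩⟩
  · exact Or.inr ⟨hAB.map_step _, hBC.map_step (hAB.1 ▸ hnd) _⟩

lemma TripleCoupling.map_foldl {A B C : List (ℝ × ℕ) × ℕ} (items : List (ℝ × ℕ))
    (hnd : (items.map Prod.fst ++ A.1.map Prod.fst).Nodup) (h : TripleCoupling A B C) :
    TripleCoupling (items.foldl step A) (items.foldl step B) (items.foldl step C) := by
  induction items generalizing A B C with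
  | nil => exact h
  | cons it rest ih =>
    rw [List.map_cons, List.cons_append] at hnd
    refine ih ?_ (h.map_step (List.nodup_append.1 (List.nodup_cons.1 hnd).2).2.1 it)
    rw [map_fst_step]
    exact List.perm_middle.nodup_iff.2 hnd

theorem R_convex_middle (pre post : List (ℝ × ℕ)) (x : ℝ)
    (hnd : (pre.map Prod.fst ++ x :: post.map Prod.fst).Nodup) (k : ℕ) :
    2 * R (pre ++ (x, k + 1) :: post)
      ≤ R (pre ++ (x, k) :: post) + R (pre ++ (x, k + 2) :: post) := by
  obtain ⟨z, r, hz, hstep⟩ := exists_step_eq (run pre) x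
  have hR : ∀ v, R (pre ++ (x, v) :: post) = (post.foldl step ((x, v) :: z, r)).2 := by
    intro v
    rw [R, run, List.foldl_append, List.foldl_cons, ← run, hstep]
  have hinit : TripleCoupling ((x, k) :: z, r) ((x, k + 1) :: z, r) ((x, k + 2) :: z, r) :=
    .inl ⟨x, x, le_rfl, ⟨⟨[], z, k, rfl, rfl⟩, rfl⟩, ⟨⟨[], z, k + 1, rfl, rfl⟩, rfl⟩⟩
  have hnd' : (post.map Prod.fst ++ ((x, k) :: z).map Prod.fst).Nodup := by
    rw [List.map_cons, hz, run, map_fst_foldl_step, List.map_nil, List.append_nil]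
    refine (List.perm_middle.trans ((List.perm_append_comm.trans
      ((List.reverse_perm _).append_right _)).cons x)).nodup_iff.2 ?_
    exact List.perm_middle.nodup_iff.1 hnd
  rw [hR, hR, hR]
  exact (hinit.map_foldl post hnd').two_mul_le

lemma step_snd_le (a : List (ℝ × ℕ) × ℕ) (it : ℝ × ℕ) : (step a it).2 ≤ a.2 + 1 := by
  obtain ⟨s, r⟩ := a
  obtain ⟨x, v⟩ := it
  cases h : parent s x with
  | none => simp [step_of_parent_eq_none h]
  | some y => simp [step_of_parent_eq_some h]

lemma R_le_length (items : List (ℝ × ℕ)) : R items ≤ items.length := by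
  suffices ∀ a, (items.foldl step a).2 ≤ a.2 + items.length by simpa [R, run] using this ([], 0)
  induction items with
  | nil => simp
  | cons it rest ih =>
    intro a
    have := ih (step a it)
    have := step_snd_le a it
    simp only [List.foldl_cons, List.length_cons]
    omega

lemma exists_map_update_eq_append {n : ℕ} (u : Fin n → ℝ) (w : Fin n → ℕ) (i : Fin n) :
    ∃ pre post : List (ℝ × ℕ),
      pre.map Prod.fst ++ u i :: post.map Prod.fst = (List.finRange n).map u ∧
      ∀ k, (List.finRange n).map (fun j => (u j, Function.update w i k j))
        = pre ++ (u i, k) :: post := by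
  obtain ⟨P, Q, hsplit⟩ := List.append_of_mem (List.mem_finRange i)
  have hnd : (P ++ i :: Q).Nodup := hsplit ▸ List.nodup_finRange n
  have hP : i ∉ P := fun h => List.disjoint_of_nodup_append hnd h List.mem_cons_self
  have hQ : i ∉ Q := (List.nodup_cons.1 (List.nodup_append.1 hnd).2.1).1
  have hfix : ∀ (L : List (Fin n)), i ∉ L → ∀ k,
      L.map (fun j => (u j, Function.update w i k j)) = L.map fun j => (u j, w j) :=
    fun L hL k => List.map_congr_left fun j hj =>
      by rw [Function.update_of_ne (ne_of_mem_of_not_mem hj hL)]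
  refine ⟨P.map fun j => (u j, w j), Q.map fun j => (u j, w j), ?_, fun k => ?_⟩
  · simp [hsplit, Function.comp_def]
  · rw [hsplit, List.map_append, List.map_cons, hfix P hP, hfix Q hQ, Function.update_self]

theorem R_update_convex {n : ℕ} {u : Fin n → ℝ} (hu : Function.Injective u)
    (w : Fin n → ℕ) (i : Fin n) (k : ℕ) :
    2 * R ((List.finRange n).map fun j => (u j, Function.update w i (k + 1) j))
      ≤ R ((List.finRange n).map fun j => (u j, Function.update w i k j))
        + R ((List.finRange n).map fun j => (u j, Function.update w i (k + 2) j)) := by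
  obtain ⟨pre, post, hlabels, hmap⟩ := exists_map_update_eq_append u w i
  simp only [hmap]
  exact R_convex_middle pre post (u i) (hlabels ▸ (List.nodup_finRange n).map hu) k

def DiscreteConvex (f : ℕ → ℝ) : Prop :=
  ∀ k, 2 * f (k + 1) ≤ f k + f (k + 2)

lemma DiscreteConvex.chord_le {f : ℕ → ℝ} (hf : DiscreteConvex f) (ℓ k : ℕ) :
    f ℓ + (f (ℓ + 1) - f ℓ) * ((k : ℝ) - ℓ) ≤ f k := by
  have hmono : Monotone fun j => f (j + 1) - f j :=
    monotone_nat_of_le_succ fun j => by linarith [hf j]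
  rcases le_total ℓ k with h | h
  · induction k, h using Nat.le_induction with
    | base => simp
    | succ k hk ih =>
      have := hmono hk
      push_cast
      linarith
  · refine Nat.decreasingInduction
      (motive := fun k _ => f ℓ + (f (ℓ + 1) - f ℓ) * ((k : ℝ) - ℓ) ≤ f k)
      (fun k hk ih => ?_) (by simp) h
    have := hmono hk.le
    push_cast at ih
    linarith

lemma integrable_of_abs_le {α : Type*} [MeasurableSpace α] [Countable α]
    [MeasurableSingletonClass α] {ν : Measure α} [IsFiniteMeasure ν] {f : α → ℝ} {C : ℝ}
    (hb : ∀ a, |f a| ≤ C) : Integrable f ν :=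
  Integrable.of_bound (measurable_of_countable f).aestronglyMeasurable C (ae_of_all _ hb)

lemma integrable_natCast_of_lintegral_ne_top {ν : Measure ℕ}
    (hfin : ∫⁻ k, (k : ℝ≥0∞) ∂ν ≠ ⊤) :
    Integrable (fun k : ℕ => (k : ℝ)) ν := by
  simpa using integrable_toReal_of_lintegral_ne_top (measurable_of_countable _).aemeasurable hfin

lemma integral_natCast_eq_toReal (ν : Measure ℕ) :
    ∫ k, (k : ℝ) ∂ν = (∫⁻ k, (k : ℝ≥0∞) ∂ν).toReal := by
  simpa using integral_toReal (μ := ν)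
    (measurable_of_countable (fun k : ℕ => (k : ℝ≥0∞))).aemeasurable
    (ae_of_all _ fun k => ENNReal.natCast_lt_top k)

theorem integral_le_of_discreteConvex_of_supp_two_point (μ μ' : Measure ℕ)
    [IsProbabilityMeasure μ] [IsProbabilityMeasure μ']
    (hfin : ∫⁻ k, (k : ℝ≥0∞) ∂μ ≠ ⊤)
    (hmean : ∫⁻ k, (k : ℝ≥0∞) ∂μ = ∫⁻ k, (k : ℝ≥0∞) ∂μ')
    (ℓ : ℕ) (hsupp : ∀ i : ℕ, i ≠ ℓ → i ≠ ℓ + 1 → μ' {i} = 0)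
    {f : ℕ → ℝ} (hf : DiscreteConvex f) {C : ℝ} (hb : ∀ k, |f k| ≤ C) :
    ∫ k, f k ∂μ' ≤ ∫ k, f k ∂μ := by
  set L : ℕ → ℝ := fun k => f ℓ + (f (ℓ + 1) - f ℓ) * ((k : ℝ) - ℓ)
  have hL (ν : Measure ℕ) [IsProbabilityMeasure ν] (hν : ∫⁻ k, (k : ℝ≥0∞) ∂ν ≠ ⊤) :
      Integrable L ν ∧
        ∫ k, L k ∂ν = f ℓ + (f (ℓ + 1) - f ℓ) * (∫ k, (k : ℝ) ∂ν - ℓ) := by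
    have hk := integrable_natCast_of_lintegral_ne_top hν
    have hslope : Integrable (fun k : ℕ => (f (ℓ + 1) - f ℓ) * ((k : ℝ) - ℓ)) ν :=
      (hk.sub (integrable_const _)).const_mul _
    refine ⟨(integrable_const _).add hslope, ?_⟩
    rw [integral_add (integrable_const _) hslope, integral_const_mul,
      integral_sub hk (integrable_const _)]
    simp
  have hfL : f =ᵐ[μ'] L := by
    refine ae_iff_of_countable.2 fun k hk => ?_
    rcases eq_or_ne k ℓ with rfl | hkℓ
    · simp [L]
    rcases eq_or_ne k (ℓ + 1) with rfl | hkℓ'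
    · simp [L]
    exact absurd (hsupp k hkℓ hkℓ') hk
  calc ∫ k, f k ∂μ' = ∫ k, L k ∂μ' := integral_congr_ae hfL
    _ = ∫ k, L k ∂μ := by
      rw [(hL μ' (hmean ▸ hfin)).2, (hL μ hfin).2, integral_natCast_eq_toReal,
        integral_natCast_eq_toReal, hmean]
    _ ≤ ∫ k, f k ∂μ :=
      integral_mono (hL μ hfin).1 (integrable_of_abs_le hb) (hf.chord_le ℓ)

lemma integral_pi_fin_succ {α : Type*} [MeasurableSpace α] (ν : Measure α) [SigmaFinite ν]
    {m : ℕ} {g : (Fin (m + 1) → α) → ℝ} (hg : Integrable g (Measure.pi fun _ => ν)) :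
    ∫ w, g w ∂(Measure.pi fun _ => ν)
      = ∫ a, ∫ y, g (Fin.cons a y) ∂(Measure.pi fun _ : Fin m => ν) ∂ν := by
  have e := (measurePreserving_piFinSuccAbove (fun _ : Fin (m + 1) => ν) 0).symm
  have hg' : Integrable (fun z => g ((MeasurableEquiv.piFinSuccAbove (fun _ => α) 0).symm z))
      (ν.prod (Measure.pi fun _ => ν)) :=
    (e.integrable_comp_emb (MeasurableEquiv.measurableEmbedding _)).2 hg
  rw [← e.integral_comp', integral_prod _ hg']
  simp [MeasurableEquiv.piFinSuccAbove_symm_apply, Fin.consEquiv]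

lemma abs_integral_le_of_abs_le {α : Type*} [MeasurableSpace α] {ν : Measure α}
    [IsProbabilityMeasure ν] {f : α → ℝ} {C : ℝ} (hb : ∀ a, |f a| ≤ C) :
    |∫ a, f a ∂ν| ≤ C := by
  simpa using norm_integral_le_of_norm_le_const (μ := ν) (f := f) (ae_of_all _ hb)

theorem integral_pi_le_of_discreteConvex (μ μ' : Measure ℕ)
    [IsProbabilityMeasure μ] [IsProbabilityMeasure μ']
    (hfin : ∫⁻ k, (k : ℝ≥0∞) ∂μ ≠ ⊤)
    (hmean : ∫⁻ k, (k : ℝ≥0∞) ∂μ = ∫⁻ k, (k : ℝ≥0∞) ∂μ')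
    (ℓ : ℕ) (hsupp : ∀ i : ℕ, i ≠ ℓ → i ≠ ℓ + 1 → μ' {i} = 0)
    {n : ℕ} {g : (Fin n → ℕ) → ℝ} {C : ℝ} (hb : ∀ w, |g w| ≤ C)
    (hg : ∀ w i, DiscreteConvex fun k => g (Function.update w i k)) :
    ∫ w, g w ∂(Measure.pi fun _ => μ') ≤ ∫ w, g w ∂(Measure.pi fun _ => μ) := by
  induction n with
  | zero => rw [Measure.pi_of_empty, Measure.pi_of_empty]
  | succ m ih =>
    set F : ℕ → ℝ := fun k => ∫ y, g (Fin.cons k y) ∂(Measure.pi fun _ => μ)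
    have hint (k : ℕ) : Integrable (fun y => g (Fin.cons k y)) (Measure.pi fun _ => μ) :=
      integrable_of_abs_le fun _ => hb _
    have hF : DiscreteConvex F := fun k => by
      simp only [F]
      rw [← integral_const_mul, ← integral_add (hint k) (hint (k + 2))]
      refine integral_mono ((hint _).const_mul 2) ((hint k).add (hint _)) fun y => ?_
      simpa only [Fin.update_cons_zero] using hg (Fin.cons 0 y) 0 k
    have hFb : ∀ k, |F k| ≤ C := fun k => abs_integral_le_of_abs_le fun _ => hb _
    calc ∫ w, g w ∂(Measure.pi fun _ => μ')
        = ∫ k, ∫ y, g (Fin.cons k y) ∂(Measure.pi fun _ => μ') ∂μ' :=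
          integral_pi_fin_succ μ' (integrable_of_abs_le hb)
      _ ≤ ∫ k, F k ∂μ' :=
          integral_mono (integrable_of_abs_le fun _ => abs_integral_le_of_abs_le fun _ => hb _)
            (integrable_of_abs_le hFb)
            fun k => ih (fun y => hb _) fun y j => by simpa only [Fin.cons_update] using hg _ j.succ
      _ ≤ ∫ k, F k ∂μ :=
          integral_le_of_discreteConvex_of_supp_two_point μ μ' hfin hmean ℓ hsupp hF hFb
      _ = ∫ w, g w ∂(Measure.pi fun _ => μ) :=
          (integral_pi_fin_succ μ (integrable_of_abs_le hb)).symm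

theorem iid_lives_mean_comparison_general
    (μ μ' : Measure ℕ) [IsProbabilityMeasure μ] [IsProbabilityMeasure μ']
    (hfin : ∫⁻ k, (k : ℝ≥0∞) ∂μ ≠ ⊤)
    (hmean : ∫⁻ k, (k : ℝ≥0∞) ∂μ = ∫⁻ k, (k : ℝ≥0∞) ∂μ')
    (ℓ : ℕ) (hsupp : ∀ i : ℕ, i ≠ ℓ → i ≠ ℓ + 1 → μ' {i} = 0)
    (n : ℕ) (u : Fin n → ℝ)
    (huinj : Function.Injective u) :
    ∫ w : Fin n → ℕ, (R ((List.finRange n).map fun i => (u i, w i)) : ℝ)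
        ∂(Measure.pi fun _ : Fin n => μ')
      ≤ ∫ w : Fin n → ℕ, (R ((List.finRange n).map fun i => (u i, w i)) : ℝ)
          ∂(Measure.pi fun _ : Fin n => μ) := by
  refine integral_pi_le_of_discreteConvex μ μ' hfin hmean ℓ hsupp (C := n)
    (fun w => ?_) (fun w i k => ?_)
  · rw [abs_of_nonneg (Nat.cast_nonneg _), Nat.cast_le]
    simpa using R_le_length ((List.finRange n).map fun i => (u i, w i))
  · dsimp only
    exact_mod_cast R_update_convex huinj w i k

/-- Among offspring laws with a given mean, the one supported on two consecutive
integers requires on average the fewest heaps (deterministic labels, i.i.d. lives). -/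
theorem iid_lives_mean_comparison
    (μ μ' : Measure ℕ) [IsProbabilityMeasure μ] [IsProbabilityMeasure μ']
    (hμ0 : μ {0} = 0) (hμ'0 : μ' {0} = 0)
    (hfin : ∫⁻ k, (k : ℝ≥0∞) ∂μ ≠ ⊤)
    (hmean : ∫⁻ k, (k : ℝ≥0∞) ∂μ = ∫⁻ k, (k : ℝ≥0∞) ∂μ')
    (ℓ : ℕ) (hℓ : 1 ≤ ℓ) (hsupp : ∀ i : ℕ, i ≠ ℓ → i ≠ ℓ + 1 → μ' {i} = 0)
    (n : ℕ) (hn : 1 ≤ n) (u : Fin n → ℝ)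
    (hu : ∀ i, u i ∈ Set.Ioo (0 : ℝ) 1) (huinj : Function.Injective u) :
    ∫ w : Fin n → ℕ, (R ((List.finRange n).map fun i => (u i, w i)) : ℝ)
        ∂(Measure.pi fun _ : Fin n => μ')
      ≤ ∫ w : Fin n → ℕ, (R ((List.finRange n).map fun i => (u i, w i)) : ℝ)
          ∂(Measure.pi fun _ : Fin n => μ) :=
  iid_lives_mean_comparison_general μ μ' hfin hmean ℓ hsupp n u huinj

end HeapPatience
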